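/- arXiv:2503.21071 — 3 statements merged into one kernel-verified Lean document; each statement's English description precedes it below -/
import Mathlib

section
/- Let q ≥ 1, d ≥ 1, and let Θ ⊆ ℝ^d be a closed ℓq-ball. Let μ and ν be probability measures supported on Θ, and suppose ν = ν₀ + ν₁ where ν₀ is an arbitrary (nonnegative) measure and ν₁ is absolutely continuous with respect to Lebesgue measure with density at least p_min > 0 everywhere on Θ. Let Δ > 0 and suppose TV(μ, ν) < p_min · vol(B_q^d(1)) · (Δ/4)^d, where vol(B_q^d(1)) is the Lebesgue volume of the unit ℓq-ball in ℝ^d. Then for every subset U of Θ that is open in the subspace topology of Θ, μ(U) ≤ ν(U^Δ), where U^Δ = {x ∈ Θ : inf_{u∈U} ‖x−u‖_q ≤ Δ} is the Δ-expansion of U in ℓq distance. (This improves the factor (r/(4R))^d of the general convex-domain conversion to (1/4)^d when Θ is itself an ℓq-ball.) -/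
open MeasureTheory
open scoped ENNReal Pointwise

noncomputable section

/-- The ℓq norm on ℝ^d. -/
def lqNorm {d : ℕ} (q : ℝ) (x : Fin d → ℝ) : ℝ := (∑ i, |x i| ^ q) ^ (1 / q)

/-- The closed ℓq-ball of radius `r` centered at `c` in ℝ^d. -/
def lqBall (d : ℕ) (q : ℝ) (c : Fin d → ℝ) (r : ℝ) : Set (Fin d → ℝ) :=
  {x | lqNorm q (x - c) ≤ r}

/-- The total variation distance between two measures. -/
def tvDist {α : Type*} [MeasurableSpace α] (μ ν : Measure α) : ℝ :=
  ⨆ S : {S : Set α // MeasurableSet S}, |(μ S.1).toReal - (ν S.1).toReal|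

/-- The `α`-expansion of `U` inside `Θ` in ℓq distance:
`U^α = {x ∈ Θ : inf_{u ∈ U} ‖x - u‖_q ≤ α}`. -/
def expand {d : ℕ} (q : ℝ) (Θ U : Set (Fin d → ℝ)) (α : ℝ) : Set (Fin d → ℝ) :=
  {x ∈ Θ | sInf {t : ℝ | ∃ u ∈ U, t = lqNorm q (x - u)} ≤ α}

/-! ### Auxiliary lemmas -/

section Aux

variable {d : ℕ} {q : ℝ}

lemma lqNorm_nonneg (q : ℝ) (x : Fin d → ℝ) : 0 ≤ lqNorm q x :=
  Real.rpow_nonneg (Finset.sum_nonneg fun _ _ => Real.rpow_nonneg (abs_nonneg _) _) _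

lemma lqNorm_zero (hq : 0 < q) : lqNorm q (0 : Fin d → ℝ) = 0 := by
  simp [lqNorm, Real.zero_rpow hq.ne', one_div, Real.zero_rpow (inv_ne_zero hq.ne')]

lemma lqNorm_neg (q : ℝ) (x : Fin d → ℝ) : lqNorm q (-x) = lqNorm q x := by
  simp [lqNorm]

lemma lqNorm_sub_comm (q : ℝ) (x y : Fin d → ℝ) : lqNorm q (x - y) = lqNorm q (y - x) := by
  rw [← lqNorm_neg q (x - y), neg_sub]

lemma lqNorm_smul (hq : 0 < q) (t : ℝ) (x : Fin d → ℝ) :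
    lqNorm q (t • x) = |t| * lqNorm q x := by
  unfold lqNorm
  have h1 : ∀ i : Fin d, |(t • x) i| ^ q = |t| ^ q * |x i| ^ q := by
    intro i
    simp only [Pi.smul_apply, smul_eq_mul, abs_mul]
    rw [Real.mul_rpow (abs_nonneg _) (abs_nonneg _)]
  rw [Finset.sum_congr rfl fun i _ => h1 i, ← Finset.mul_sum,
    Real.mul_rpow (by positivity) (Finset.sum_nonneg fun i _ => by positivity),
    ← Real.rpow_mul (abs_nonneg t), mul_one_div_cancel hq.ne', Real.rpow_one]

lemma lqNorm_add_le (hq : 1 ≤ q) (x y : Fin d → ℝ) :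
    lqNorm q (x + y) ≤ lqNorm q x + lqNorm q y := by
  have h := Real.Lp_add_le (s := Finset.univ) x y hq
  simpa [lqNorm] using h

lemma lqNorm_sub_triangle (hq : 1 ≤ q) (x y z : Fin d → ℝ) :
    lqNorm q (x - z) ≤ lqNorm q (x - y) + lqNorm q (y - z) := by
  have h := lqNorm_add_le hq (x - y) (y - z)
  rwa [sub_add_sub_cancel] at h

lemma lqNorm_continuous (hq : 0 < q) : Continuous (lqNorm (d := d) q) := by
  apply Continuous.rpow_const
  · exact continuous_finset_sum _ fun i _ =>
      ((continuous_apply i).abs).rpow_const fun x => Or.inr hq.le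
  · intro x; exact Or.inr (by positivity)

/-- Distance from a point to a set in ℓq norm. -/
def dU {d : ℕ} (q : ℝ) (U : Set (Fin d → ℝ)) (x : Fin d → ℝ) : ℝ :=
  sInf {t : ℝ | ∃ u ∈ U, t = lqNorm q (x - u)}

lemma mem_expand {Θ U : Set (Fin d → ℝ)} {α : ℝ} {x : Fin d → ℝ} :
    x ∈ expand q Θ U α ↔ x ∈ Θ ∧ dU q U x ≤ α := Iff.rfl

lemma dU_bddBelow {U : Set (Fin d → ℝ)} {x : Fin d → ℝ} :
    BddBelow {t : ℝ | ∃ u ∈ U, t = lqNorm q (x - u)} :=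
  ⟨0, by rintro t ⟨u, _, rfl⟩; exact lqNorm_nonneg q _⟩

lemma dU_le {U : Set (Fin d → ℝ)} {u : Fin d → ℝ} (hu : u ∈ U) (x : Fin d → ℝ) :
    dU q U x ≤ lqNorm q (x - u) :=
  csInf_le dU_bddBelow ⟨u, hu, rfl⟩

lemma dU_lip (hq : 1 ≤ q) {U : Set (Fin d → ℝ)} (hU : U.Nonempty) (x y : Fin d → ℝ) :
    dU q U x ≤ dU q U y + lqNorm q (x - y) := by
  obtain ⟨u₀, hu₀⟩ := hU
  have h : dU q U x - lqNorm q (x - y) ≤ dU q U y := by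
    unfold dU
    refine le_csInf ⟨lqNorm q (y - u₀), ⟨u₀, hu₀, rfl⟩⟩ ?_
    rintro t ⟨u, hu, rfl⟩
    have h1 : sInf {t : ℝ | ∃ u ∈ U, t = lqNorm q (x - u)} ≤ lqNorm q (x - u) :=
      csInf_le dU_bddBelow ⟨u, hu, rfl⟩
    have h2 := lqNorm_sub_triangle hq x y u
    linarith
  linarith

lemma dU_continuous (hq : 1 ≤ q) {U : Set (Fin d → ℝ)} (hU : U.Nonempty) :
    Continuous (dU q U) := by
  have hq0 : 0 < q := lt_of_lt_of_le one_pos hq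
  rw [continuous_iff_continuousAt]
  intro y
  have hcont : Continuous fun x : Fin d → ℝ => lqNorm q (x - y) :=
    (lqNorm_continuous hq0).comp (continuous_id.sub continuous_const)
  have hy0 : lqNorm q (y - y) = 0 := by rw [sub_self, lqNorm_zero hq0]
  have h1 : Filter.Tendsto (fun x => dU q U y - lqNorm q (x - y)) (nhds y)
      (nhds (dU q U y)) := by
    have hc : Continuous fun x => dU q U y - lqNorm q (x - y) := continuous_const.sub hcont
    have := hc.tendsto y
    simpa [lqNorm_zero hq0] using this
  have h2 : Filter.Tendsto (fun x => dU q U y + lqNorm q (x - y)) (nhds y)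
      (nhds (dU q U y)) := by
    have hc : Continuous fun x => dU q U y + lqNorm q (x - y) := continuous_const.add hcont
    have := hc.tendsto y
    simpa [lqNorm_zero hq0] using this
  refine tendsto_of_tendsto_of_tendsto_of_le_of_le h1 h2 ?_ ?_
  · intro x
    show dU q U y - lqNorm q (x - y) ≤ dU q U x
    have h := dU_lip hq hU y x
    have h' : lqNorm q (y - x) = lqNorm q (x - y) := lqNorm_sub_comm q y x
    linarith
  · intro x
    show dU q U x ≤ dU q U y + lqNorm q (x - y)
    exact dU_lip hq hU x y

lemma lqBall_measurable (hq : 0 < q) (c : Fin d → ℝ) (r : ℝ) :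
    MeasurableSet (lqBall d q c r) := by
  have h : lqBall d q c r = (fun x => lqNorm q (x - c)) ⁻¹' Set.Iic r := rfl
  rw [h]
  exact ((lqNorm_continuous hq).comp (continuous_id.sub continuous_const)).measurable
    measurableSet_Iic

lemma mem_lqBall {c : Fin d → ℝ} {r : ℝ} {x : Fin d → ℝ} :
    x ∈ lqBall d q c r ↔ lqNorm q (x - c) ≤ r := Iff.rfl

lemma lqBall_zero_smul (hq : 0 < q) {ρ : ℝ} (hρ : 0 < ρ) :
    lqBall d q 0 ρ = ρ • lqBall d q 0 1 := by
  ext y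
  rw [Set.mem_smul_set_iff_inv_smul_mem₀ hρ.ne', mem_lqBall, mem_lqBall, sub_zero, sub_zero,
    lqNorm_smul hq, abs_of_pos (inv_pos.2 hρ), inv_mul_le_iff₀ hρ, mul_one]

lemma volume_lqBall (hq : 0 < q) (w : Fin d → ℝ) {ρ : ℝ} (hρ : 0 < ρ) :
    volume (lqBall d q w ρ) = ENNReal.ofReal (ρ ^ d) * volume (lqBall d q 0 1) := by
  have hset : lqBall d q w ρ = (fun x => x + -w) ⁻¹' lqBall d q 0 ρ := by
    ext x
    simp [lqBall, sub_zero, sub_eq_add_neg]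
  rw [hset, measure_preimage_add_right volume (-w) _, lqBall_zero_smul hq hρ,
    Measure.addHaar_smul, Module.finrank_fin_fun, abs_of_pos (pow_pos hρ _)]

lemma volume_lqBall_one_lt_top (hq : 1 ≤ q) : volume (lqBall d q 0 1) < ⊤ := by
  have hq0 : 0 < q := lt_of_lt_of_le one_pos hq
  have hsub : lqBall d q 0 1 ⊆ Set.pi Set.univ fun _ : Fin d => Set.Icc (-1 : ℝ) 1 := by
    intro x hx i _
    have hx' : lqNorm q x ≤ 1 := by simpa [lqBall, sub_zero] using hx
    have h0 : |x i| ^ q ≤ ∑ j, |x j| ^ q :=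
      Finset.single_le_sum (f := fun j => |x j| ^ q) (fun j _ => by positivity)
        (Finset.mem_univ i)
    have h1 : (|x i| ^ q) ^ (1/q) ≤ lqNorm q x :=
      Real.rpow_le_rpow (by positivity) h0 (by positivity)
    rw [← Real.rpow_mul (abs_nonneg _), mul_one_div_cancel hq0.ne', Real.rpow_one] at h1
    exact abs_le.1 (le_trans h1 hx')
  refine lt_of_le_of_lt (measure_mono hsub) ?_
  rw [volume_pi_pi]
  exact ENNReal.prod_lt_top fun i _ => by rw [Real.volume_Icc]; exact ENNReal.ofReal_lt_top

lemma sub_le_tvDist {α : Type*} [MeasurableSpace α] (μ ν : Measure α)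
    [IsProbabilityMeasure μ] [IsProbabilityMeasure ν] {S : Set α} (hS : MeasurableSet S) :
    (μ S).toReal - (ν S).toReal ≤ tvDist μ ν := by
  have hbdd : BddAbove (Set.range fun S : {S : Set α // MeasurableSet S} =>
      |(μ S.1).toReal - (ν S.1).toReal|) := by
    refine ⟨1, ?_⟩
    rintro x ⟨T, rfl⟩
    have h1 : (μ T.1).toReal ≤ 1 := by
      have := ENNReal.toReal_mono ENNReal.one_ne_top (prob_le_one (μ := μ) (s := T.1))
      simpa using this
    have h2 : (ν T.1).toReal ≤ 1 := by
      have := ENNReal.toReal_mono ENNReal.one_ne_top (prob_le_one (μ := ν) (s := T.1))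
      simpa using this
    have h3 : (0:ℝ) ≤ (μ T.1).toReal := ENNReal.toReal_nonneg
    have h4 : (0:ℝ) ≤ (ν T.1).toReal := ENNReal.toReal_nonneg
    rw [abs_le]
    constructor <;> linarith
  exact le_trans (le_abs_self _) (le_ciSup hbdd ⟨S, hS⟩)

end Aux

/-- **Lemma 1 of the paper (converting TV to W∞), ℓq-ball domain.**
If `Θ` is itself a closed ℓq-ball, `μ, ν` are probability measures on `Θ` with
`ν = ν₀ + ν₁` where `ν₁` has Lebesgue density at least `p_min` on `Θ`, and
`TV(μ,ν) < p_min · vol(B_q^d(1)) · (Δ/4)^d`, then `μ(U) ≤ ν(U^Δ)` for every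
relatively open `U ⊆ Θ` — the factor `(r/(4R))^d` improves to `(1/4)^d`. -/
theorem tv_to_winfty_ball
    (d : ℕ) (hd : 1 ≤ d) (q : ℝ) (hq : 1 ≤ q)
    (c : Fin d → ℝ) (r : ℝ)
    (Θ : Set (Fin d → ℝ)) (hΘ : Θ = lqBall d q c r)
    (μ ν ν₀ : Measure (Fin d → ℝ)) (f : (Fin d → ℝ) → ℝ) (pmin : ℝ) (hpmin : 0 < pmin)
    (hμ : IsProbabilityMeasure μ) (hν : IsProbabilityMeasure ν)
    (hμsupp : μ Θᶜ = 0) (hνsupp : ν Θᶜ = 0)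
    (hνdecomp : ν = ν₀ + volume.withDensity fun x => ENNReal.ofReal (f x))
    (hf : ∀ x ∈ Θ, pmin ≤ f x)
    (Δ : ℝ) (hΔ : 0 < Δ)
    (hTV : tvDist μ ν < pmin * (volume (lqBall d q 0 1)).toReal * (Δ / 4) ^ d) :
    ∀ U : Set (Fin d → ℝ), (∃ V, IsOpen V ∧ U = V ∩ Θ) →
      μ U ≤ ν (expand q Θ U Δ) := by
  intro U hUopen
  haveI := hμ; haveI := hν
  set E := expand q Θ U Δ with hE
  rcases Set.eq_empty_or_nonempty U with rfl | hUne
  · simp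
  have hq0 : 0 < q := lt_of_lt_of_le one_pos hq
  have hΘmeas : MeasurableSet Θ := hΘ ▸ lqBall_measurable hq0 c r
  have hνΘ : (1:ℝ≥0∞) ≤ ν Θ := by
    have h := measure_union_le (μ := ν) Θ Θᶜ
    rw [Set.union_compl_self, measure_univ, hνsupp, add_zero] at h
    exact h
  by_cases hzcase : Θ ⊆ E
  · calc μ U ≤ 1 := prob_le_one
      _ ≤ ν Θ := hνΘ
      _ ≤ ν E := measure_mono hzcase
  obtain ⟨z, hzΘ, hzE⟩ := Set.not_subset.1 hzcase
  obtain ⟨u, huU⟩ := hUne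
  have hUsub : U ⊆ Θ := by
    obtain ⟨V, _, rfl⟩ := hUopen
    exact Set.inter_subset_right
  have huΘ : u ∈ Θ := hUsub huU
  have hmem : ∀ x, x ∈ Θ ↔ lqNorm q (x - c) ≤ r := by
    intro x; rw [hΘ]; exact Iff.rfl
  have hUne : U.Nonempty := ⟨u, huU⟩
  have hdz : Δ < dU q U z := by
    by_contra h
    push_neg at h
    exact hzE (mem_expand.2 ⟨hzΘ, h⟩)
  have huc : lqNorm q (u - c) ≤ r := (hmem u).1 huΘ
  have hzc : lqNorm q (z - c) ≤ r := (hmem z).1 hzΘ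
  have hzu : lqNorm q (z - u) ≤ 2 * r := by
    have h := lqNorm_sub_triangle hq z c u
    have hcu : lqNorm q (c - u) = lqNorm q (u - c) := lqNorm_sub_comm q c u
    linarith
  have hΔ2r : Δ < 2 * r := lt_of_lt_of_le (lt_of_lt_of_le hdz (dU_le huU z)) hzu
  have hr : 0 < r := by linarith
  set l : ℝ := 1 - Δ / (4 * r) with hl
  have hl0 : 0 < l := by
    have h : Δ / (4 * r) < 1 := by
      rw [div_lt_one (by linarith)]
      linarith
    simp only [hl]; linarith
  have hl1 : l < 1 := by
    have h : 0 < Δ / (4 * r) := by positivity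
    simp only [hl]; linarith
  set uh := c + l • (u - c) with huh
  set zh := c + l • (z - c) with hzh
  have habs : |l - 1| = Δ / (4 * r) := by
    rw [abs_of_neg (by linarith)]
    simp only [hl]; ring
  have huhu : lqNorm q (uh - u) ≤ Δ / 4 := by
    have heq : uh - u = (l - 1) • (u - c) := by
      simp only [huh]; module
    rw [heq, lqNorm_smul hq0, habs]
    calc Δ / (4 * r) * lqNorm q (u - c) ≤ Δ / (4 * r) * r := by
          exact mul_le_mul_of_nonneg_left huc (by positivity)
      _ = Δ / 4 := by field_simp
  have hzhz : lqNorm q (zh - z) ≤ Δ / 4 := by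
    have heq : zh - z = (l - 1) • (z - c) := by
      simp only [hzh]; module
    rw [heq, lqNorm_smul hq0, habs]
    calc Δ / (4 * r) * lqNorm q (z - c) ≤ Δ / (4 * r) * r := by
          exact mul_le_mul_of_nonneg_left hzc (by positivity)
      _ = Δ / 4 := by field_simp
  have huhc : lqNorm q (uh - c) ≤ l * r := by
    have heq : uh - c = l • (u - c) := by simp only [huh]; module
    rw [heq, lqNorm_smul hq0, abs_of_pos hl0]
    exact mul_le_mul_of_nonneg_left huc hl0.le
  have hzhc : lqNorm q (zh - c) ≤ l * r := by
    have heq : zh - c = l • (z - c) := by simp only [hzh]; module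
    rw [heq, lqNorm_smul hq0, abs_of_pos hl0]
    exact mul_le_mul_of_nonneg_left hzc hl0.le
  set γ : ℝ → (Fin d → ℝ) := fun t => uh + t • (zh - uh) with hγ
  have hγ0 : γ 0 = uh := by
    show uh + (0:ℝ) • (zh - uh) = uh
    rw [zero_smul, add_zero]
  have hγ1 : γ 1 = zh := by
    show uh + (1:ℝ) • (zh - uh) = zh
    rw [one_smul, add_sub_cancel]
  have hγcont : Continuous γ := by
    apply continuous_const.add
    exact continuous_id.smul continuous_const
  have hgcont : Continuous fun t => dU q U (γ t) := (dU_continuous hq hUne).comp hγcont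
  have hg0 : dU q U (γ 0) ≤ Δ / 4 := by
    rw [hγ0]
    exact le_trans (dU_le huU uh) huhu
  have hg1 : 3 * Δ / 4 < dU q U (γ 1) := by
    rw [hγ1]
    have h := dU_lip hq hUne z zh
    have hsymm : lqNorm q (z - zh) = lqNorm q (zh - z) := lqNorm_sub_comm q z zh
    linarith
  have hIVT := intermediate_value_Icc (by norm_num : (0:ℝ) ≤ 1) hgcont.continuousOn
  have hmemI : Δ / 2 ∈ Set.Icc (dU q U (γ 0)) (dU q U (γ 1)) :=
    ⟨by linarith, by linarith⟩
  obtain ⟨t₀, ht₀, hdw⟩ := hIVT hmemI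
  set w := γ t₀ with hw
  have hdw' : dU q U w = Δ / 2 := hdw
  have hwc : lqNorm q (w - c) ≤ l * r := by
    have heq : w - c = (1 - t₀) • (uh - c) + t₀ • (zh - c) := by
      show (uh + t₀ • (zh - uh)) - c = (1 - t₀) • (uh - c) + t₀ • (zh - c)
      module
    rw [heq]
    have h1 := lqNorm_add_le hq ((1 - t₀) • (uh - c)) (t₀ • (zh - c))
    rw [lqNorm_smul hq0, lqNorm_smul hq0, abs_of_nonneg (by linarith [ht₀.2] : (0:ℝ) ≤ 1 - t₀),
      abs_of_nonneg ht₀.1] at h1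
    have h2 : (1 - t₀) * lqNorm q (uh - c) ≤ (1 - t₀) * (l * r) :=
      mul_le_mul_of_nonneg_left huhc (by linarith [ht₀.2])
    have h3 : t₀ * lqNorm q (zh - c) ≤ t₀ * (l * r) :=
      mul_le_mul_of_nonneg_left hzhc ht₀.1
    nlinarith
  have hlr : l * r = r - Δ / 4 := by
    simp only [hl]; field_simp
  set Bw := lqBall d q w (Δ / 4) with hBw
  have hBwΘ : Bw ⊆ Θ := by
    intro x hx
    have hxw : lqNorm q (x - w) ≤ Δ / 4 := hx
    rw [hmem x]
    have h := lqNorm_sub_triangle hq x w c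
    calc lqNorm q (x - c) ≤ lqNorm q (x - w) + lqNorm q (w - c) := h
      _ ≤ Δ / 4 + l * r := add_le_add hxw hwc
      _ = r := by rw [hlr]; ring
  have hBwE : Bw ⊆ E := by
    intro x hx
    have hxw : lqNorm q (x - w) ≤ Δ / 4 := hx
    refine mem_expand.2 ⟨hBwΘ hx, ?_⟩
    have h := dU_lip hq hUne x w
    rw [hdw'] at h
    linarith
  have hBwU : Disjoint U Bw := by
    rw [Set.disjoint_left]
    intro x hxU hxBw
    have hxw : lqNorm q (x - w) ≤ Δ / 4 := hxBw
    have h1 : dU q U x ≤ lqNorm q (x - x) := dU_le hxU x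
    rw [sub_self, lqNorm_zero hq0] at h1
    have h2 := dU_lip hq hUne w x
    rw [hdw', lqNorm_sub_comm q w x] at h2
    linarith
  have hBwmeas : MeasurableSet Bw := lqBall_measurable hq0 w (Δ / 4)
  have hUmeas : MeasurableSet U := by
    obtain ⟨V, hV, rfl⟩ := hUopen
    exact hV.measurableSet.inter hΘmeas
  have hEmeas : MeasurableSet E := by
    have h : E = Θ ∩ dU q U ⁻¹' Set.Iic Δ := by
      ext x; exact mem_expand
    rw [h]
    exact hΘmeas.inter (((dU_continuous hq hUne).measurable) measurableSet_Iic)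
  have hρ4 : (0:ℝ) < Δ / 4 := by linarith
  have hvol : volume Bw = ENNReal.ofReal ((Δ / 4) ^ d) * volume (lqBall d q 0 1) :=
    volume_lqBall hq0 w hρ4
  have hνBw : ENNReal.ofReal pmin * volume Bw ≤ ν Bw := by
    rw [hνdecomp, Measure.add_apply]
    have h1 : ENNReal.ofReal pmin * volume Bw ≤
        (volume.withDensity fun x => ENNReal.ofReal (f x)) Bw := by
      rw [withDensity_apply _ hBwmeas]
      have h2 : ∫⁻ _ in Bw, ENNReal.ofReal pmin ∂volume ≤
          ∫⁻ x in Bw, ENNReal.ofReal (f x) ∂volume := by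
        apply lintegral_mono_ae
        filter_upwards [ae_restrict_mem hBwmeas] with x hx
        exact ENNReal.ofReal_le_ofReal (hf x (hBwΘ hx))
      calc ENNReal.ofReal pmin * volume Bw
          = ∫⁻ _ in Bw, ENNReal.ofReal pmin ∂volume := by
            rw [setLIntegral_const, mul_comm]
        _ ≤ _ := h2
    exact le_trans h1 le_add_self
  have hvolB1top : volume (lqBall d q 0 1) ≠ ⊤ := (volume_lqBall_one_lt_top hq).ne
  have hBwtoReal : pmin * (volume (lqBall d q 0 1)).toReal * (Δ / 4) ^ d ≤ (ν Bw).toReal := by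
    have h := ENNReal.toReal_mono (measure_ne_top ν Bw) hνBw
    rw [hvol, ← mul_assoc, ENNReal.toReal_mul, ENNReal.toReal_mul,
      ENNReal.toReal_ofReal hpmin.le, ENNReal.toReal_ofReal (by positivity)] at h
    calc pmin * (volume (lqBall d q 0 1)).toReal * (Δ / 4) ^ d
        = pmin * (Δ / 4) ^ d * (volume (lqBall d q 0 1)).toReal := by ring
      _ ≤ (ν Bw).toReal := h
  have hunion : ν (U ∪ Bw) = ν U + ν Bw := measure_union hBwU hBwmeas
  have hUE : U ⊆ E := by
    intro x hx
    refine mem_expand.2 ⟨hUsub hx, ?_⟩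
    have h := dU_le (q := q) hx x
    rw [sub_self, lqNorm_zero hq0] at h
    linarith
  have hUBwE : U ∪ Bw ⊆ E := Set.union_subset hUE hBwE
  have htv := sub_le_tvDist μ ν hUmeas
  have hfin : (μ U).toReal ≤ (ν E).toReal := by
    have h5 : (ν (U ∪ Bw)).toReal ≤ (ν E).toReal :=
      ENNReal.toReal_mono (measure_ne_top ν E) (measure_mono hUBwE)
    have h6 : (ν (U ∪ Bw)).toReal = (ν U).toReal + (ν Bw).toReal := by
      rw [hunion, ENNReal.toReal_add (measure_ne_top ν U) (measure_ne_top ν Bw)]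
    linarith
  exact (ENNReal.toReal_le_toReal (measure_ne_top μ U) (measure_ne_top ν E)).1 hfin

end
end

section
/- Let d ≥ 1, Δ > 0, ε > 0, and let μ and ν be probability measures on ℝ^d. Suppose there exists a coupling γ of μ and ν (a probability measure on ℝ^d × ℝ^d with first marginal μ and second marginal ν) such that γ({(x,y) : ‖x−y‖₁ > Δ}) = 0. Then for every measurable set S ⊆ ℝ^d, (μ ∗ Laplace^⊗d(Δ/ε))(S) ≤ exp(ε)·(ν ∗ Laplace^⊗d(Δ/ε))(S), and symmetrically (ν ∗ Laplace^⊗d(Δ/ε))(S) ≤ exp(ε)·(μ ∗ Laplace^⊗d(Δ/ε))(S). -/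
open MeasureTheory
open scoped ENNReal

noncomputable section

/-- The d-fold product of the Laplace(b) distribution on ℝ^d, given by its density. -/
def laplacePi (d : ℕ) (b : ℝ) : Measure (Fin d → ℝ) :=
  volume.withDensity fun x => ENNReal.ofReal (∏ i, (1 / (2 * b)) * Real.exp (-|x i| / b))

/-- Convolution of two measures on ℝ^d: the pushforward of the product under addition. -/
def mconv {d : ℕ} (μ ν : Measure (Fin d → ℝ)) : Measure (Fin d → ℝ) :=
  (μ.prod ν).map fun p => p.1 + p.2

/-! Since `|s - x|₁ ≥ |s - y|₁ - |x - y|₁`, the Laplace density `p` of scale `b = Δ / ε` satisfies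
`p (s - x) ≤ exp (|x - y|₁ / b) * p (s - y) ≤ exp ε * p (s - y)` whenever `|x - y|₁ ≤ Δ`.
Writing `(μ ∗ Laplace) S = ∫ x, ∫ s in S, p (s - x) ∂μ` and integrating this pointwise bound
against the coupling `γ`, which is carried by `{|x - y|₁ ≤ Δ}` and has marginals `μ` and `ν`
(or `ν` and `μ` after swapping the roles of the coordinates), gives both inequalities. -/

section Coupling

variable {Ω α : Type*} [MeasurableSpace Ω] [MeasurableSpace α]

theorem lintegral_map_le_mul_lintegral_map {γ : Measure Ω} {φ ψ : Ω → α}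
    (hφ : Measurable φ) (hψ : Measurable ψ) {f g : α → ℝ≥0∞} (hf : Measurable f)
    (hg : Measurable g) {c : ℝ≥0∞} (h : ∀ᵐ ω ∂γ, f (φ ω) ≤ c * g (ψ ω)) :
    ∫⁻ x, f x ∂(γ.map φ) ≤ c * ∫⁻ x, g x ∂(γ.map ψ) := by
  rw [lintegral_map hf hφ, lintegral_map hg hψ,
    ← lintegral_const_mul c (f := fun ω => g (ψ ω)) (hg.comp hψ)]
  exact lintegral_mono_ae h

end Coupling

section Convolution

variable {G : Type*} [AddCommGroup G] [MeasurableSpace G]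

theorem measurable_setLIntegral_comp_sub [MeasurableSub₂ G] (ρ : Measure G) [SFinite ρ]
    {g : G → ℝ≥0∞} (hg : Measurable g) (S : Set G) : Measurable fun x => ∫⁻ y in S, g (y - x) ∂ρ :=
  (hg.comp (measurable_snd.sub measurable_fst)).lintegral_prod_right'

theorem conv_withDensity_apply [MeasurableAdd₂ G] (μ ρ : Measure G) [SFinite ρ]
    [ρ.IsAddLeftInvariant] (g : G → ℝ≥0∞) {S : Set G} (hS : MeasurableSet S) :
    (μ ∗ ρ.withDensity g) S = ∫⁻ x, ∫⁻ y in S, g (y - x) ∂ρ ∂μ := by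
  have hadd : Measurable fun p : G × G => p.1 + p.2 := measurable_fst.add measurable_snd
  rw [Measure.conv, Measure.map_apply hadd hS, Measure.prod_apply (hadd hS)]
  refine lintegral_congr fun x => ?_
  rw [withDensity_apply' _, ← (measurePreserving_add_left ρ x).setLIntegral_comp_preimage_emb
    (measurableEmbedding_addLeft x) (fun y => g (y - x))]
  simp only [add_sub_cancel_left]
  rfl

end Convolution

section Laplace

variable {ι : Type*} [Fintype ι]

def laplacePdf (b : ℝ) (z : ι → ℝ) : ℝ :=
  ∏ i, (1 / (2 * b)) * Real.exp (-|z i| / b)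

theorem measurable_laplacePdf (b : ℝ) : Measurable (laplacePdf (ι := ι) b) := by
  unfold laplacePdf
  fun_prop

theorem laplacePdf_nonneg {b : ℝ} (hb : 0 ≤ b) (z : ι → ℝ) : 0 ≤ laplacePdf b z := by
  unfold laplacePdf
  positivity

theorem laplacePdf_le_exp_mul {b : ℝ} (hb : 0 ≤ b) (u v : ι → ℝ) :
    laplacePdf b u ≤ Real.exp ((∑ i, |u i - v i|) / b) * laplacePdf b v := by
  have hcoord : ∀ i, (1 / (2 * b)) * Real.exp (-|u i| / b)
      ≤ Real.exp (|u i - v i| / b) * ((1 / (2 * b)) * Real.exp (-|v i| / b)) := by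
    intro i
    rw [mul_left_comm, ← Real.exp_add]
    gcongr
    rw [← add_div]
    gcongr
    linarith [abs_sub_abs_le_abs_sub (v i) (u i), abs_sub_comm (u i) (v i)]
  calc laplacePdf b u
      ≤ ∏ i, Real.exp (|u i - v i| / b) * ((1 / (2 * b)) * Real.exp (-|v i| / b)) :=
        Finset.prod_le_prod (fun i _ => by positivity) fun i _ => hcoord i
    _ = Real.exp ((∑ i, |u i - v i|) / b) * laplacePdf b v := by
        rw [Finset.prod_mul_distrib, ← Real.exp_sum, Finset.sum_div, laplacePdf]

theorem setLIntegral_laplacePdf_sub_le {Δ ε : ℝ} (hΔ : 0 < Δ) (hε : 0 < ε) {x y : ι → ℝ}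
    (hxy : ∑ i, |x i - y i| ≤ Δ) (S : Set (ι → ℝ)) :
    ∫⁻ s in S, ENNReal.ofReal (laplacePdf (Δ / ε) (s - x))
      ≤ ENNReal.ofReal (Real.exp ε) * ∫⁻ s in S, ENNReal.ofReal (laplacePdf (Δ / ε) (s - y)) := by
  have hb : 0 < Δ / ε := div_pos hΔ hε
  have hshift : ∀ s : ι → ℝ, (∑ i, |(s - x) i - (s - y) i|) / (Δ / ε) ≤ ε := by
    intro s
    simp only [Pi.sub_apply, sub_sub_sub_cancel_left, abs_sub_comm (y _)]
    rw [div_le_iff₀ hb, mul_div_cancel₀ _ hε.ne']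
    exact hxy
  rw [← lintegral_const_mul' _ _ ENNReal.ofReal_ne_top]
  refine lintegral_mono fun s => ?_
  rw [← ENNReal.ofReal_mul (Real.exp_pos ε).le]
  refine ENNReal.ofReal_le_ofReal ((laplacePdf_le_exp_mul hb.le (s - x) (s - y)).trans ?_)
  exact mul_le_mul_of_nonneg_right (Real.exp_le_exp.2 (hshift s)) (laplacePdf_nonneg hb.le _)

end Laplace

theorem laplace_perturbation_general
    (d : ℕ) (Δ ε : ℝ) (hΔ : 0 < Δ) (hε : 0 < ε)
    (μ ν : Measure (Fin d → ℝ))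
    (γ : Measure ((Fin d → ℝ) × (Fin d → ℝ)))
    (hfst : γ.map Prod.fst = μ) (hsnd : γ.map Prod.snd = ν)
    (hcoupling : γ {p | Δ < ∑ i, |p.1 i - p.2 i|} = 0) :
    ∀ S : Set (Fin d → ℝ), MeasurableSet S →
      mconv μ (laplacePi d (Δ / ε)) S
          ≤ ENNReal.ofReal (Real.exp ε) * mconv ν (laplacePi d (Δ / ε)) S
      ∧ mconv ν (laplacePi d (Δ / ε)) S
          ≤ ENNReal.ofReal (Real.exp ε) * mconv μ (laplacePi d (Δ / ε)) S := by
  intro S hS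
  have hclose : ∀ᵐ p ∂γ, ∑ i, |p.1 i - p.2 i| ≤ Δ := by
    rw [ae_iff]
    simpa only [not_le] using hcoupling
  have hconv (ρ : Measure (Fin d → ℝ)) : mconv ρ (laplacePi d (Δ / ε)) S
      = ∫⁻ x, ∫⁻ s in S, ENNReal.ofReal (laplacePdf (Δ / ε) (s - x)) ∂volume ∂ρ :=
    conv_withDensity_apply ρ volume (fun z => ENNReal.ofReal (laplacePdf (Δ / ε) z)) hS
  have hmeas := measurable_setLIntegral_comp_sub volume
    (measurable_laplacePdf (Δ / ε)).ennreal_ofReal S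
  rw [hconv, hconv, ← hfst, ← hsnd]
  exact ⟨lintegral_map_le_mul_lintegral_map measurable_fst measurable_snd hmeas hmeas
      (hclose.mono fun p hp => setLIntegral_laplacePdf_sub_le hΔ hε hp S),
    lintegral_map_le_mul_lintegral_map measurable_snd measurable_fst hmeas hmeas
      (hclose.mono fun p hp => setLIntegral_laplacePdf_sub_le hΔ hε
        (by simpa only [abs_sub_comm] using hp) S)⟩

/-- **Laplace perturbation (Lemma 2 of the paper).**
If there is a coupling `γ` of `μ` and `ν` under which `‖x - y‖₁ ≤ Δ` almost surely
(i.e. `W_∞^{ℓ1}(μ,ν) ≤ Δ`), then convolving both measures with `Laplace^⊗d(Δ/ε)`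
makes them `ε`-indistinguishable in max divergence, in both directions. -/
theorem laplace_perturbation
    (d : ℕ) (hd : 1 ≤ d) (Δ ε : ℝ) (hΔ : 0 < Δ) (hε : 0 < ε)
    (μ ν : Measure (Fin d → ℝ))
    (hμ : IsProbabilityMeasure μ) (hν : IsProbabilityMeasure ν)
    (γ : Measure ((Fin d → ℝ) × (Fin d → ℝ))) (hγ : IsProbabilityMeasure γ)
    (hfst : γ.map Prod.fst = μ) (hsnd : γ.map Prod.snd = ν)
    (hcoupling : γ {p | Δ < ∑ i, |p.1 i - p.2 i|} = 0) :
    ∀ S : Set (Fin d → ℝ), MeasurableSet S →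
      mconv μ (laplacePi d (Δ / ε)) S
          ≤ ENNReal.ofReal (Real.exp ε) * mconv ν (laplacePi d (Δ / ε)) S
      ∧ mconv ν (laplacePi d (Δ / ε)) S
          ≤ ENNReal.ofReal (Real.exp ε) * mconv μ (laplacePi d (Δ / ε)) S :=
  laplace_perturbation_general d Δ ε hΔ hε μ ν γ hfst hsnd hcoupling

end
end

section
/- Let d ≥ 1, ε' > 0, δ ∈ (0,1), ω ∈ (0,1), and let Θ ⊆ ℝ^d be a closed ℓ∞-ball of diameter R > 0 (i.e., an axis-aligned cube of side length R). Set Δ = 2·d·R·(δ/(2ω))^{1/d}. Let x_apx be a random point of Θ with law μ (any probability measure on Θ); let x equal x_apx with probability 1−ω and otherwise equal an independent uniform sample from Θ; and let x_pure = x + Z where Z ∼ Laplace^⊗d(2Δ/ε') is independent. Then E‖x_pure − x_apx‖_∞ ≤ ω·R + (4·R·d·(log d + 1)/ε')·(δ/(2ω))^{1/d}, where ‖v‖_∞ = max_i |v_i|. -/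
/-!
Write `x_pure - x_apx = (x - x_apx) + Z`. The first summand vanishes when the coin keeps
`x_apx` and is otherwise a difference of two points of the cube, so its expected norm is at
most `ωR`. For Laplace noise of scale `b`, `‖Z‖∞ ≤ T + ∑ᵢ (|Zᵢ| - T)⁺` for every `T ≥ 0`, and
`E (|Zᵢ| - T)⁺ = b e^{-T/b}`; the threshold `T = b log d` gives `E ‖Z‖∞ ≤ b (log d + 1)`,
which is the claim for `b = 2Δ/ε' = 4dR(δ/(2ω))^{1/d}/ε'`.
-/

open MeasureTheory
open scoped ENNReal

noncomputable section

/-- The uniform distribution (normalized Lebesgue measure) on a set Θ ⊆ ℝ^d. -/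
def unifOn {d : ℕ} (Θ : Set (Fin d → ℝ)) : Measure (Fin d → ℝ) :=
  (volume Θ)⁻¹ • volume.restrict Θ

/-- The Bernoulli distribution on `Bool` putting mass `p` on `true` and `1-p` on `false`. -/
def bern (p : ℝ) : Measure Bool :=
  ENNReal.ofReal p • Measure.dirac true + ENNReal.ofReal (1 - p) • Measure.dirac false

open Real Set Filter Topology ProbabilityTheory

def laplacePDF (b t : ℝ) : ℝ := 1 / (2 * b) * exp (-|t| / b)

lemma integral_exp_neg_div_Ioi {b : ℝ} (hb : 0 < b) (a : ℝ) :
    ∫ s in Ioi a, exp (-s / b) = b * exp (-a / b) := by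
  have h := integral_exp_mul_Ioi (neg_lt_zero.2 (inv_pos.2 hb)) a
  simp only [neg_mul, ← neg_div, inv_mul_eq_div] at h
  rw [h]
  field_simp

lemma integral_sub_mul_exp_neg_div_Ioi {b : ℝ} (hb : 0 < b) (T : ℝ) :
    ∫ s in Ioi T, (s - T) * exp (-s / b) = b ^ 2 * exp (-T / b) := by
  have hderiv : ∀ s ∈ Ici T,
      HasDerivAt (fun s => -b * (s - T + b) * exp (-s / b)) ((s - T) * exp (-s / b)) s := by
    intro s _
    have := (((hasDerivAt_id s).sub_const T).add_const b).const_mul (-b) |>.mul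
      ((hasDerivAt_id s).neg.div_const b).exp
    refine this.congr_deriv ?_
    simp only [id, Pi.neg_apply]
    field_simp
    ring
  have hnonneg : ∀ s ∈ Ioi T, 0 ≤ (s - T) * exp (-s / b) := fun s hs =>
    mul_nonneg (sub_nonneg.2 (le_of_lt hs)) (exp_pos _).le
  have hlim : Tendsto (fun s => -b * (s - T + b) * exp (-s / b)) atTop (𝓝 0) := by
    have h1 := tendsto_rpow_mul_exp_neg_mul_atTop_nhds_zero 1 b⁻¹ (inv_pos.2 hb)
    have h0 := tendsto_rpow_mul_exp_neg_mul_atTop_nhds_zero 0 b⁻¹ (inv_pos.2 hb)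
    convert (h1.const_mul (-b)).add (h0.const_mul (-b * (b - T))) using 2 with s
    · simp only [rpow_one, rpow_zero]
      ring_nf
    · simp
  rw [integral_Ioi_of_hasDerivAt_of_nonneg' hderiv hnonneg hlim]
  ring

lemma integral_laplacePDF {b : ℝ} (hb : 0 < b) : ∫ t, laplacePDF b t = 1 := by
  simp only [laplacePDF]
  rw [integral_comp_abs (f := fun s => 1 / (2 * b) * exp (-s / b)),
    integral_const_mul, integral_exp_neg_div_Ioi hb]
  field_simp
  simp

lemma integral_laplacePDF_mul_max_abs_sub {b T : ℝ} (hb : 0 < b) (hT : 0 ≤ T) :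
    ∫ t, laplacePDF b t * max (|t| - T) 0 = b * exp (-T / b) := by
  have hind : ∀ s, 1 / (2 * b) * exp (-s / b) * max (s - T) 0
      = (Ioi T).indicator (fun s => 1 / (2 * b) * ((s - T) * exp (-s / b))) s := by
    intro s
    by_cases hs : s ∈ Ioi T
    · rw [indicator_of_mem hs, max_eq_left (sub_nonneg.2 (le_of_lt hs))]
      ring
    · rw [indicator_of_notMem hs, max_eq_right (sub_nonpos.2 (not_lt.1 hs))]
      ring
  simp only [laplacePDF]
  rw [integral_comp_abs (f := fun s => 1 / (2 * b) * exp (-s / b) * max (s - T) 0)]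
  simp only [hind]
  rw [setIntegral_indicator measurableSet_Ioi, inter_eq_right.2 (Ioi_subset_Ioi hT),
    integral_const_mul, integral_sub_mul_exp_neg_div_Ioi hb]
  field_simp

lemma laplacePi_eq_withDensity (d : ℕ) (b : ℝ) :
    laplacePi d b = volume.withDensity fun z => ENNReal.ofReal (∏ i, laplacePDF b (z i)) :=
  rfl

lemma prod_laplacePDF_nonneg {d : ℕ} {b : ℝ} (hb : 0 < b) (z : Fin d → ℝ) :
    0 ≤ ∏ i, laplacePDF b (z i) :=
  Finset.prod_nonneg fun _ _ => mul_nonneg (by positivity) (exp_pos _).le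

lemma integral_prod_laplacePDF {d : ℕ} {b : ℝ} (hb : 0 < b) :
    ∫ z : Fin d → ℝ, ∏ i, laplacePDF b (z i) = 1 := by
  simp [integral_fintype_prod_volume_eq_prod, integral_laplacePDF hb]

lemma isProbabilityMeasure_laplacePi (d : ℕ) {b : ℝ} (hb : 0 < b) :
    IsProbabilityMeasure (laplacePi d b) := by
  have hint : Integrable fun z : Fin d → ℝ => ∏ i, laplacePDF b (z i) :=
    .of_integral_ne_zero (by simp [integral_prod_laplacePDF hb])
  constructor
  rw [laplacePi_eq_withDensity, withDensity_apply _ MeasurableSet.univ, Measure.restrict_univ,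
    ← ofReal_integral_eq_lintegral_ofReal hint (ae_of_all _ (prod_laplacePDF_nonneg hb)),
    integral_prod_laplacePDF hb, ENNReal.ofReal_one]

lemma integral_laplacePi {d : ℕ} {b : ℝ} (hb : 0 < b) (F : (Fin d → ℝ) → ℝ) :
    ∫ z, F z ∂laplacePi d b = ∫ z, (∏ i, laplacePDF b (z i)) * F z := by
  rw [laplacePi_eq_withDensity, integral_withDensity_eq_integral_toReal_smul
    (by simp only [laplacePDF]; fun_prop) (ae_of_all _ fun _ => ENNReal.ofReal_lt_top)]
  simp_rw [ENNReal.toReal_ofReal (prod_laplacePDF_nonneg hb _), smul_eq_mul]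

lemma integral_laplacePi_comp_eval {d : ℕ} {b : ℝ} (hb : 0 < b) (i : Fin d) (g : ℝ → ℝ) :
    ∫ z, g (z i) ∂laplacePi d b = ∫ t, laplacePDF b t * g t := by
  let factor : Fin d → ℝ → ℝ := fun j t => laplacePDF b t * if j = i then g t else 1
  have hfactor : ∀ z : Fin d → ℝ, (∏ j, laplacePDF b (z j)) * g (z i) = ∏ j, factor j (z j) := by
    intro z
    rw [Finset.prod_mul_distrib, Finset.prod_ite_eq' Finset.univ i (fun j => g (z j))]
    simp
  have hintegral : ∀ j, ∫ t, factor j t = if j = i then ∫ t, laplacePDF b t * g t else 1 := by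
    intro j
    split_ifs with hj <;> simp [factor, hj, integral_laplacePDF hb]
  simp_rw [integral_laplacePi hb, hfactor, integral_fintype_prod_volume_eq_prod, hintegral]
  simp

lemma pi_norm_le_add_sum_max_abs_sub {ι : Type*} [Fintype ι] {T : ℝ} (hT : 0 ≤ T) (z : ι → ℝ) :
    ‖z‖ ≤ T + ∑ i, max (|z i| - T) 0 := by
  have hexcess : ∀ i, 0 ≤ max (|z i| - T) 0 := fun i => le_max_right _ _
  refine (pi_norm_le_iff_of_nonneg (add_nonneg hT (Finset.sum_nonneg fun i _ => hexcess i))).2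
    fun i => ?_
  calc ‖z i‖ ≤ T + max (|z i| - T) 0 := by
        rw [Real.norm_eq_abs]; linarith [le_max_left (|z i| - T) 0]
    _ ≤ T + ∑ j, max (|z j| - T) 0 := by
        gcongr
        exact Finset.single_le_sum (f := fun j => max (|z j| - T) 0) (fun j _ => hexcess j)
          (Finset.mem_univ i)

lemma ciSup_abs_eq_pi_norm {ι : Type*} [Fintype ι] [Nonempty ι] (v : ι → ℝ) :
    ⨆ i, |v i| = ‖v‖ :=
  le_antisymm (ciSup_le fun i => norm_le_pi_norm v i)
    ((pi_norm_le_iff_of_nonempty v).2 fun i =>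
      (Real.norm_eq_abs _).trans_le (le_ciSup (f := fun i => |v i|) (Finite.bddAbove_range _) i))

lemma setOf_forall_abs_sub_le_eq_closedBall {ι : Type*} [Fintype ι] (c : ι → ℝ) {r : ℝ}
    (hr : 0 ≤ r) : {x : ι → ℝ | ∀ i, |x i - c i| ≤ r} = Metric.closedBall c r := by
  ext x
  simp [dist_pi_le_iff hr, Real.dist_eq]

section LaplaceNoise

variable {d : ℕ} {b T : ℝ}

lemma integral_max_abs_eval_sub_laplacePi (hb : 0 < b) (hT : 0 ≤ T) (i : Fin d) :
    ∫ z, max (|z i| - T) 0 ∂laplacePi d b = b * exp (-T / b) := by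
  rw [integral_laplacePi_comp_eval hb i (fun t => max (|t| - T) 0),
    integral_laplacePDF_mul_max_abs_sub hb hT]

lemma integrable_max_abs_eval_sub_laplacePi (hb : 0 < b) (hT : 0 ≤ T) (i : Fin d) :
    Integrable (fun z => max (|z i| - T) 0) (laplacePi d b) :=
  .of_integral_ne_zero (by rw [integral_max_abs_eval_sub_laplacePi hb hT]; positivity)

lemma integrable_add_sum_max_abs_sub_laplacePi (hb : 0 < b) (hT : 0 ≤ T) :
    Integrable (fun z => T + ∑ i, max (|z i| - T) 0) (laplacePi d b) :=
  have := isProbabilityMeasure_laplacePi d hb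
  (integrable_const T).add
    (integrable_finsetSum _ fun i _ => integrable_max_abs_eval_sub_laplacePi hb hT i)

lemma integrable_norm_laplacePi (hb : 0 < b) : Integrable (fun z => ‖z‖) (laplacePi d b) :=
  (integrable_add_sum_max_abs_sub_laplacePi hb le_rfl).mono' continuous_norm.aestronglyMeasurable
    (ae_of_all _ fun z => (norm_norm z).le.trans (pi_norm_le_add_sum_max_abs_sub le_rfl z))

lemma integral_norm_laplacePi_le_add (hb : 0 < b) (hT : 0 ≤ T) :
    ∫ z, ‖z‖ ∂laplacePi d b ≤ T + d * (b * exp (-T / b)) := by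
  have := isProbabilityMeasure_laplacePi d hb
  calc ∫ z, ‖z‖ ∂laplacePi d b ≤ ∫ z, T + ∑ i, max (|z i| - T) 0 ∂laplacePi d b :=
        integral_mono_of_nonneg (ae_of_all _ fun _ => norm_nonneg _)
          (integrable_add_sum_max_abs_sub_laplacePi hb hT)
          (ae_of_all _ (pi_norm_le_add_sum_max_abs_sub hT))
    _ = T + d * (b * exp (-T / b)) := by
        rw [integral_add (integrable_const T)
          (integrable_finsetSum _ fun i _ => integrable_max_abs_eval_sub_laplacePi hb hT i),
          integral_finsetSum _ fun i _ => integrable_max_abs_eval_sub_laplacePi hb hT i]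
        simp [integral_max_abs_eval_sub_laplacePi hb hT]

lemma integral_norm_laplacePi_le (hb : 0 < b) : ∫ z, ‖z‖ ∂laplacePi d b ≤ b * (log d + 1) := by
  have hd : (d : ℝ) * exp (-(b * log d) / b) ≤ 1 := by
    rcases Nat.eq_zero_or_pos d with rfl | hd
    · simp
    · rw [neg_div, mul_div_cancel_left₀ _ hb.ne', exp_neg, exp_log (by positivity),
        mul_inv_cancel₀ (by positivity)]
  calc ∫ z, ‖z‖ ∂laplacePi d b ≤ b * log d + d * (b * exp (-(b * log d) / b)) :=
        integral_norm_laplacePi_le_add hb (mul_nonneg hb.le (log_natCast_nonneg d))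
    _ ≤ b * (log d + 1) := by nlinarith

end LaplaceNoise

lemma isProbabilityMeasure_bern {p : ℝ} (hp₀ : 0 ≤ p) (hp₁ : p ≤ 1) :
    IsProbabilityMeasure (bern p) := by
  constructor
  simp [bern, ← ENNReal.ofReal_add hp₀ (sub_nonneg.2 hp₁)]

lemma integral_bern {p : ℝ} (hp₀ : 0 ≤ p) (hp₁ : p ≤ 1) (f : Bool → ℝ) :
    ∫ x, f x ∂bern p = p * f true + (1 - p) * f false := by
  have := isProbabilityMeasure_bern hp₀ hp₁
  rw [integral_fintype .of_finite]
  simp [bern, measureReal_def, ENNReal.toReal_ofReal hp₀, ENNReal.toReal_ofReal (sub_nonneg.2 hp₁)]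

lemma unifOn_eq_cond {d : ℕ} (Θ : Set (Fin d → ℝ)) : unifOn Θ = volume[|Θ] := rfl

theorem integral_norm_mixture_add_sub_le {E : Type*} [NormedAddCommGroup E] [MeasurableSpace E]
    {μ ν ρ : Measure E} [IsProbabilityMeasure μ] [IsProbabilityMeasure ν] [IsProbabilityMeasure ρ]
    {Θ : Set E} {R ω : ℝ} (hΘ : ∀ x ∈ Θ, ∀ y ∈ Θ, dist x y ≤ R) (hμ : ∀ᵐ a ∂μ, a ∈ Θ)
    (hν : ∀ᵐ u ∂ν, u ∈ Θ) (hω₀ : 0 ≤ ω) (hω₁ : ω ≤ 1) (hρ : Integrable (fun z => ‖z‖) ρ) :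
    ∫ p, ‖(if p.2.1 then p.1 else p.2.2.1) + p.2.2.2 - p.1‖
        ∂μ.prod ((bern (1 - ω)).prod (ν.prod ρ)) ≤ ω * R + ∫ z, ‖z‖ ∂ρ := by
  have := isProbabilityMeasure_bern (p := 1 - ω) (by linarith) (by linarith)
  let cost : Bool → ℝ := fun keep => if keep then 0 else R
  have hbound : ∀ᵐ p ∂μ.prod ((bern (1 - ω)).prod (ν.prod ρ)),
      ‖(if p.2.1 then p.1 else p.2.2.1) + p.2.2.2 - p.1‖ ≤ cost p.2.1 + ‖p.2.2.2‖ := by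
    have ha : ∀ᵐ p ∂μ.prod ((bern (1 - ω)).prod (ν.prod ρ)), p.1 ∈ Θ :=
      Measure.quasiMeasurePreserving_fst.ae hμ
    have hu : ∀ᵐ p ∂μ.prod ((bern (1 - ω)).prod (ν.prod ρ)), p.2.2.1 ∈ Θ :=
      Measure.quasiMeasurePreserving_snd.ae <| Measure.quasiMeasurePreserving_snd.ae <|
        Measure.quasiMeasurePreserving_fst.ae hν
    filter_upwards [ha, hu] with ⟨a, keep, u, z⟩ ha hu
    calc ‖(if keep then a else u) + z - a‖ ≤ ‖(if keep then a else u) - a‖ + ‖z‖ := by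
          rw [add_sub_right_comm]; exact norm_add_le _ _
      _ ≤ cost keep + ‖z‖ := by
          gcongr
          cases keep
          · simpa [cost, ← dist_eq_norm] using hΘ u hu a ha
          · simp [cost]
  have hcost : Integrable (fun p : E × Bool × E × E => cost p.2.1)
      (μ.prod ((bern (1 - ω)).prod (ν.prod ρ))) :=
    ((Integrable.of_finite (μ := bern (1 - ω)) (f := cost)).comp_fst (ν.prod ρ)).comp_snd μ
  have hnoise : Integrable (fun p : E × Bool × E × E => ‖p.2.2.2‖)
      (μ.prod ((bern (1 - ω)).prod (ν.prod ρ))) := ((hρ.comp_snd ν).comp_snd _).comp_snd μ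
  calc _ ≤ ∫ p, cost p.2.1 + ‖p.2.2.2‖ ∂μ.prod ((bern (1 - ω)).prod (ν.prod ρ)) :=
        integral_mono_of_nonneg (ae_of_all _ fun _ => norm_nonneg _) (hcost.add hnoise) hbound
    _ = ω * R + ∫ z, ‖z‖ ∂ρ := by
        rw [integral_add hcost hnoise, integral_fun_snd (fun q : Bool × E × E => cost q.1),
          integral_fun_fst, integral_bern (by linarith) (by linarith),
          integral_fun_snd (fun q : Bool × E × E => ‖q.2.2‖),
          integral_fun_snd (fun q : E × E => ‖q.2‖), integral_fun_snd (fun z : E => ‖z‖)]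
        simp only [probReal_univ, one_smul, cost, Bool.false_eq_true, if_true, if_false]
        ring

/-- **Purification utility in the ℓ∞ norm (Appendix D of the paper).**
With `Θ` an ℓ∞-ball (axis-aligned cube) of diameter `R` and
`Δ = 2dR(δ/(2ω))^{1/d}`, on the canonical product space carrying an independent
quadruple `(x_apx, coin, u, Z)` with `x_apx ∼ μ`, `coin` Bernoulli(1-ω), `u ∼ Unif(Θ)`
and `Z ∼ Laplace^⊗d(2Δ/ε')`, letting `x = x_apx` on heads and `x = u` otherwise, and
`x_pure = x + Z`, one has
`E‖x_pure - x_apx‖_∞ ≤ ωR + (4Rd(log d + 1)/ε')(δ/(2ω))^{1/d}`. -/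
theorem purification_utility_linf
    (d : ℕ) (hd : 1 ≤ d)
    (ε' δ ω R : ℝ) (hε' : 0 < ε')
    (hδ : δ ∈ Set.Ioo (0 : ℝ) 1) (hω : ω ∈ Set.Ioo (0 : ℝ) 1) (hR : 0 < R)
    (c : Fin d → ℝ) (Θ : Set (Fin d → ℝ))
    (hΘ : Θ = {x : Fin d → ℝ | ∀ i, |x i - c i| ≤ R / 2})
    (μ : Measure (Fin d → ℝ)) (hμ : IsProbabilityMeasure μ) (hμsupp : μ Θᶜ = 0)
    (Δ : ℝ) (hΔ : Δ = 2 * (d : ℝ) * R * (δ / (2 * ω)) ^ (1 / (d : ℝ))) :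
    ∫ p : (Fin d → ℝ) × (Bool × ((Fin d → ℝ) × (Fin d → ℝ))),
        (⨆ i, |((if p.2.1 then p.1 else p.2.2.1) + p.2.2.2 - p.1) i|)
      ∂(μ.prod ((bern (1 - ω)).prod ((unifOn Θ).prod (laplacePi d (2 * Δ / ε')))))
      ≤ ω * R + (4 * R * (d : ℝ) * (Real.log d + 1) / ε') * (δ / (2 * ω)) ^ (1 / (d : ℝ)) := by
  have hb : 0 < 2 * Δ / ε' := by
    have := rpow_pos_of_pos (div_pos hδ.1 (mul_pos two_pos hω.1)) (1 / (d : ℝ))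
    rw [hΔ]
    positivity
  have hcube : Θ = Metric.closedBall c (R / 2) :=
    hΘ.trans (setOf_forall_abs_sub_le_eq_closedBall c (by positivity))
  have hunif : IsProbabilityMeasure (unifOn Θ) := by
    rw [unifOn_eq_cond, hcube]
    refine cond_isProbabilityMeasure_of_finite ?_ ?_ <;>
      simp [Real.volume_pi_closedBall c (half_pos hR).le, hR]
  have hlaplace := isProbabilityMeasure_laplacePi d hb
  have : Nonempty (Fin d) := ⟨⟨0, hd⟩⟩
  simp_rw [ciSup_abs_eq_pi_norm]
  calc _ ≤ ω * R + ∫ z, ‖z‖ ∂laplacePi d (2 * Δ / ε') :=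
        integral_norm_mixture_add_sub_le
          (fun x hx y hy => by
            rw [hcube, Metric.mem_closedBall] at hx hy
            linarith [dist_triangle_right x y c])
          (mem_ae_iff.2 hμsupp)
          (by rw [unifOn_eq_cond]; exact ae_cond_mem (hcube ▸ measurableSet_closedBall))
          hω.1.le hω.2.le (integrable_norm_laplacePi hb)
    _ ≤ ω * R + 2 * Δ / ε' * (log d + 1) := by gcongr; exact integral_norm_laplacePi_le hb
    _ = _ := by rw [hΔ]; ring

end
end
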